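/- Let X be uniform on (0,1], let m be strictly increasing, and for an integer k ≥ 2 set Y_k = Σᵢ₌₁ᵏ 1{X ∈ ((i−1)/k, i/k]} · m(i/k). Then AGC(X, Y_k) = 1 and AGC(Y_k, X) = 1 − 1/k². -/

import Mathlib

open MeasureTheory ProbabilityTheory

noncomputable section

variable {Ω : Type*} [MeasurableSpace Ω]

/-- Mid distribution function of `X` under `μ`: `F̄(x) = P(X < x) + (1/2) P(X = x)`. -/
def mdf (μ : Measure Ω) (X : Ω → ℝ) (x : ℝ) : ℝ :=
  (μ {ω | X ω < x}).toReal + (1 / 2) * (μ {ω | X ω = x}).toReal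

/-- Covariance of two real random variables under `μ`. -/
def covar (μ : Measure Ω) (f g : Ω → ℝ) : ℝ :=
  (∫ ω, f ω * g ω ∂μ) - (∫ ω, f ω ∂μ) * (∫ ω, g ω ∂μ)

/-- Similarity function `s(a,b) = 1{a < b} + (1/2) 1{a = b}`. -/
def simFun (a b : ℝ) : ℝ :=
  (if a < b then 1 else 0) + (1 / 2) * (if a = b then 1 else 0)

/-- Granularity `γ(X) = P(X = X' = X'')` for i.i.d. copies of `X`. -/
def gran (μ : Measure Ω) (X : Ω → ℝ) : ℝ :=
  ((μ.prod (μ.prod μ)) {ω | X ω.1 = X ω.2.1 ∧ X ω.2.1 = X ω.2.2}).toReal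

/-- Asymmetric grade correlation `AGC(U,V) = Cov(F̄_U(U), Ḡ_V(V)) / Var(Ḡ_V(V))`. -/
def agc (μ : Measure Ω) (U V : Ω → ℝ) : ℝ :=
  covar μ (fun ω => mdf μ U (U ω)) (fun ω => mdf μ V (V ω)) /
    covar μ (fun ω => mdf μ V (V ω)) (fun ω => mdf μ V (V ω))

/-- Coefficient of monotone association `CMA(U,V) = (AGC(U,V) + 1) / 2`. -/
def cma (μ : Measure Ω) (U V : Ω → ℝ) : ℝ := (agc μ U V + 1) / 2

/-- `X` is not almost surely constant. -/
def Nondeg (μ : Measure Ω) (X : Ω → ℝ) : Prop := ¬ ∃ c : ℝ, X =ᵐ[μ] fun _ => c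

/-- Pearson correlation. -/
def pcor (μ : Measure Ω) (f g : Ω → ℝ) : ℝ :=
  covar μ f g / (Real.sqrt (covar μ f f) * Real.sqrt (covar μ g g))

/-- Quantile function (generalized inverse of the CDF). -/
def qf (μ : Measure Ω) (Y : Ω → ℝ) (α : ℝ) : ℝ :=
  sInf {y : ℝ | α ≤ (μ {ω | Y ω ≤ y}).toReal}

/-- Discretized outcome `Y_k = Σ_{i=1}^k 1{X ∈ ((i−1)/k, i/k]} m(i/k)`. -/
def Yk (X : Ω → ℝ) (m : ℝ → ℝ) (k : ℕ) (ω : Ω) : ℝ :=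
  ∑ i ∈ Finset.Icc 1 k,
    if X ω ∈ Set.Ioc (((i : ℝ) - 1) / k) ((i : ℝ) / k) then m ((i : ℝ) / k) else 0

namespace Stmt15Aux

noncomputable def S (k : ℕ) (c : ℕ → ℝ) (x : ℝ) : ℝ :=
  ∑ i ∈ Finset.Icc 1 k, if x ∈ Set.Ioc (((i : ℝ) - 1) / k) ((i : ℝ) / k) then c i else 0

notation "ν" => (volume.restrict (Set.Ioc (0:ℝ) 1))

lemma measurable_S (k : ℕ) (c : ℕ → ℝ) : Measurable (S k c) := by
  apply Finset.measurable_sum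
  intro i _
  exact Measurable.ite measurableSet_Ioc measurable_const measurable_const

lemma piece_unique {k : ℕ} (hk : 0 < k) {i j : ℕ} {x : ℝ}
    (hi : x ∈ Set.Ioc (((i : ℝ) - 1) / k) ((i : ℝ) / k))
    (hj : x ∈ Set.Ioc (((j : ℝ) - 1) / k) ((j : ℝ) / k)) : i = j := by
  have hk' : (0:ℝ) < k := by exact_mod_cast hk
  have h1 : ((i : ℝ) - 1) / k < (j : ℝ) / k := lt_of_lt_of_le hi.1 hj.2
  have h2 : ((j : ℝ) - 1) / k < (i : ℝ) / k := lt_of_lt_of_le hj.1 hi.2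
  have h1' : (i : ℝ) - 1 < j := by exact (div_lt_div_iff_of_pos_right hk').mp h1
  have h2' : (j : ℝ) - 1 < i := by exact (div_lt_div_iff_of_pos_right hk').mp h2
  have : i < j + 1 := by exact_mod_cast (by linarith : (i:ℝ) < j + 1)
  have : j < i + 1 := by exact_mod_cast (by linarith : (j:ℝ) < i + 1)
  omega

lemma exists_piece {k : ℕ} (hk : 0 < k) {x : ℝ} (hx : x ∈ Set.Ioc (0:ℝ) 1) :
    ∃ i ∈ Finset.Icc 1 k, x ∈ Set.Ioc (((i : ℝ) - 1) / k) ((i : ℝ) / k) := by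
  have hk' : (0:ℝ) < k := by exact_mod_cast hk
  set n : ℤ := ⌈(k:ℝ) * x⌉ with hn
  have hpos : 0 < (k:ℝ) * x := mul_pos hk' hx.1
  have hn1 : 1 ≤ n := by
    have := Int.ceil_pos.mpr hpos
    omega
  have hnk : n ≤ k := Int.ceil_le.mpr (by
    have : (k:ℝ) * x ≤ k * 1 := by nlinarith [hx.2]
    simpa using this)
  refine ⟨n.toNat, ?_, ?_, ?_⟩
  · simp only [Finset.mem_Icc]
    omega
  · have hcast : ((n.toNat : ℕ) : ℝ) = (n : ℝ) := by exact_mod_cast Int.toNat_of_nonneg (by omega)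
    rw [hcast, div_lt_iff₀ hk']
    have := Int.ceil_lt_add_one ((k:ℝ) * x)
    rw [← hn] at this
    linarith [this]
  · have hcast : ((n.toNat : ℕ) : ℝ) = (n : ℝ) := by exact_mod_cast Int.toNat_of_nonneg (by omega)
    rw [hcast, le_div_iff₀ hk']
    have := Int.le_ceil ((k:ℝ) * x)
    rw [← hn] at this
    linarith [this]

lemma S_eval {k : ℕ} (hk : 0 < k) (c : ℕ → ℝ) {i : ℕ} {x : ℝ} (hik : i ∈ Finset.Icc 1 k)
    (hi : x ∈ Set.Ioc (((i : ℝ) - 1) / k) ((i : ℝ) / k)) : S k c x = c i := by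
  rw [S, Finset.sum_eq_single_of_mem i hik]
  · rw [if_pos hi]
  · intro j _ hji
    rw [if_neg]
    intro hj
    exact hji (piece_unique hk hj hi)

lemma S_not_mem {k : ℕ} (c : ℕ → ℝ) {x : ℝ}
    (h : ∀ i ∈ Finset.Icc 1 k, x ∉ Set.Ioc (((i : ℝ) - 1) / k) ((i : ℝ) / k)) :
    S k c x = 0 := by
  rw [S]
  exact Finset.sum_eq_zero fun i hi => if_neg (h i hi)

lemma S_mul {k : ℕ} (hk : 0 < k) (c d : ℕ → ℝ) (x : ℝ) :
    S k c x * S k d x = S k (fun i => c i * d i) x := by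
  by_cases h : ∃ i ∈ Finset.Icc 1 k, x ∈ Set.Ioc (((i : ℝ) - 1) / k) ((i : ℝ) / k)
  · obtain ⟨i, hik, hi⟩ := h
    rw [S_eval hk c hik hi, S_eval hk d hik hi, S_eval hk _ hik hi]
  · push_neg at h
    rw [S_not_mem c h, S_not_mem d h, S_not_mem _ h, zero_mul]

lemma piece_subset {k : ℕ} {i : ℕ} (hik : i ∈ Finset.Icc 1 k) :
    Set.Ioc (((i : ℝ) - 1) / k) ((i : ℝ) / k) ⊆ Set.Ioc (0:ℝ) 1 := by
  simp only [Finset.mem_Icc] at hik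
  have hk' : (0:ℝ) < k := by
    exact_mod_cast Nat.lt_of_lt_of_le (Nat.lt_of_lt_of_le Nat.zero_lt_one hik.1) hik.2
  apply Set.Ioc_subset_Ioc
  · apply div_nonneg _ hk'.le
    have : (1:ℝ) ≤ i := by exact_mod_cast hik.1
    linarith
  · rw [div_le_one hk']
    exact_mod_cast hik.2

lemma integral_Ioc_id {a b : ℝ} (h : a ≤ b) :
    ∫ x in Set.Ioc a b, x = (b ^ 2 - a ^ 2) / 2 := by
  rw [← intervalIntegral.integral_of_le h, integral_id]

lemma integral_Ioc_sq {a b : ℝ} (h : a ≤ b) :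
    ∫ x in Set.Ioc a b, x * x = (b ^ 3 - a ^ 3) / 3 := by
  have : ∀ x : ℝ, x * x = x ^ 2 := fun x => (sq x).symm
  simp_rw [this]
  rw [← intervalIntegral.integral_of_le h, integral_pow]
  norm_num

lemma sum1 (k : ℕ) : ∑ i ∈ Finset.Icc 1 k, (2 * (i:ℝ) - 1) = (k:ℝ) ^ 2 := by
  induction k with
  | zero => simp
  | succ n ih =>
    rw [Finset.sum_Icc_succ_top (by omega : 1 ≤ n + 1), ih]
    push_cast; ring

lemma sum2 (k : ℕ) : ∑ i ∈ Finset.Icc 1 k, (2 * (i:ℝ) - 1) ^ 2 = (k:ℝ) * (4 * (k:ℝ) ^ 2 - 1) / 3 := by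
  induction k with
  | zero => simp
  | succ n ih =>
    rw [Finset.sum_Icc_succ_top (by omega : 1 ≤ n + 1), ih]
    push_cast; ring

variable {a b : ℝ}

lemma nu_restrict (hsub : Set.Ioc a b ⊆ Set.Ioc (0:ℝ) 1) :
    Measure.restrict ν (Set.Ioc a b) = volume.restrict (Set.Ioc a b) := by
  rw [Measure.restrict_restrict measurableSet_Ioc, Set.inter_eq_left.mpr hsub]

lemma integrable_ite_piece (hsub : Set.Ioc a b ⊆ Set.Ioc (0:ℝ) 1) {f : ℝ → ℝ}
    (hf : Continuous f) :
    Integrable (fun x => if x ∈ Set.Ioc a b then f x else 0) ν := by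
  have h1 : (fun x => if x ∈ Set.Ioc a b then f x else 0) = (Set.Ioc a b).indicator f := by
    ext x; simp [Set.indicator]
  rw [h1, integrable_indicator_iff measurableSet_Ioc]
  unfold IntegrableOn
  rw [nu_restrict hsub]
  exact hf.integrableOn_Ioc

lemma piece_len {k : ℕ} (hk : 0 < k) (i : ℕ) :
    volume (Set.Ioc (((i : ℝ) - 1) / k) ((i : ℝ) / k)) = ENNReal.ofReal (1 / k) := by
  have hk' : (0:ℝ) < k := by exact_mod_cast hk
  rw [Real.volume_Ioc]
  congr 1
  field_simp
  ring

lemma integral_ite_piece' (hsub : Set.Ioc a b ⊆ Set.Ioc (0:ℝ) 1) (f : ℝ → ℝ) :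
    ∫ x, (if x ∈ Set.Ioc a b then f x else 0) ∂ν = ∫ x in Set.Ioc a b, f x := by
  have h1 : (fun x => if x ∈ Set.Ioc a b then f x else 0) = (Set.Ioc a b).indicator f := by
    ext x; simp [Set.indicator]
  rw [h1, integral_indicator measurableSet_Ioc]
  congr 1
  exact nu_restrict hsub

lemma integral_S {k : ℕ} (hk : 0 < k) (c : ℕ → ℝ) :
    ∫ x, S k c x ∂ν = ∑ i ∈ Finset.Icc 1 k, c i / k := by
  have hk' : (0:ℝ) < k := by exact_mod_cast hk
  rw [show (fun x => S k c x) = fun x => ∑ i ∈ Finset.Icc 1 k,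
      (if x ∈ Set.Ioc (((i : ℝ) - 1) / k) ((i : ℝ) / k) then c i else 0) from rfl]
  rw [integral_finset_sum _ (fun i hi => integrable_ite_piece (piece_subset hi) continuous_const)]
  refine Finset.sum_congr rfl fun i hi => ?_
  rw [integral_ite_piece' (piece_subset hi), setIntegral_const, measureReal_def, piece_len hk,
    ENNReal.toReal_ofReal (by positivity), smul_eq_mul]
  ring

lemma integral_xS {k : ℕ} (hk : 0 < k) (c : ℕ → ℝ) :
    ∫ x, x * S k c x ∂ν = ∑ i ∈ Finset.Icc 1 k, c i * (2 * (i:ℝ) - 1) / (2 * (k:ℝ) ^ 2) := by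
  have hk' : (0:ℝ) < k := by exact_mod_cast hk
  have heq : (fun x => x * S k c x) = fun x => ∑ i ∈ Finset.Icc 1 k,
      (if x ∈ Set.Ioc (((i : ℝ) - 1) / k) ((i : ℝ) / k) then x * c i else 0) := by
    ext x
    rw [S, Finset.mul_sum]
    exact Finset.sum_congr rfl fun i _ => by rw [mul_ite, mul_zero]
  rw [heq, integral_finset_sum _ (fun i hi => integrable_ite_piece (piece_subset hi)
    (continuous_mul_right (c i)))]
  refine Finset.sum_congr rfl fun i hi => ?_
  rw [integral_ite_piece' (piece_subset hi), integral_mul_const, integral_Ioc_id ?hab]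
  case hab =>
    gcongr
    linarith
  have h1 : (1:ℝ) ≤ i := by
    simp only [Finset.mem_Icc] at hi; exact_mod_cast hi.1
  field_simp
  ring

end Stmt15Aux

open Stmt15Aux in
/-- for `X` uniform on `(0,1]`, strictly increasing `m`, and `k ≥ 2`,
`AGC(X, Y_k) = 1` and `AGC(Y_k, X) = 1 − 1/k²`. -/
theorem stmt_15 (μ : Measure Ω) [IsProbabilityMeasure μ] (X : Ω → ℝ) (hX : Measurable X)
    (hunif : μ.map X = volume.restrict (Set.Ioc (0 : ℝ) 1))
    (m : ℝ → ℝ) (hm : StrictMono m) (k : ℕ) (hk : 2 ≤ k) :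
    agc μ X (Yk X m k) = 1 ∧ agc μ (Yk X m k) X = 1 - 1 / (k : ℝ) ^ 2 := by
  classical
  have hk0 : 0 < k := by omega
  have hk' : (0:ℝ) < k := by exact_mod_cast hk0
  have hk2 : (2:ℝ) ≤ k := by exact_mod_cast hk
  set mc : ℕ → ℝ := fun i => m ((i:ℝ)/k) with hmc
  set c : ℕ → ℝ := fun i => (2*(i:ℝ) - 1)/(2*(k:ℝ)) with hc
  have hY : ∀ ω, Yk X m k ω = S k mc (X ω) := fun ω => rfl
  have hmap : ∀ {s : Set ℝ}, MeasurableSet s → μ (X ⁻¹' s) = ν s := by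
    intro s hs
    rw [← Measure.map_apply hX hs, hunif]
  have hae : ∀ᵐ ω ∂μ, X ω ∈ Set.Ioc (0:ℝ) 1 := by
    rw [ae_iff]
    have h0 : {ω | ¬ X ω ∈ Set.Ioc (0:ℝ) 1} = X ⁻¹' (Set.Ioc (0:ℝ) 1)ᶜ := rfl
    rw [h0, hmap measurableSet_Ioc.compl, Measure.restrict_apply measurableSet_Ioc.compl]
    simp
  -- mdf of X
  have hmdfX : ∀ x ∈ Set.Ioc (0:ℝ) 1, mdf μ X x = x := by
    rintro x ⟨hx0, hx1⟩
    have h1 : μ {ω | X ω < x} = ENNReal.ofReal x := by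
      have he : {ω | X ω < x} = X ⁻¹' (Set.Iio x) := rfl
      rw [he, hmap measurableSet_Iio, Measure.restrict_apply measurableSet_Iio]
      have he2 : Set.Iio x ∩ Set.Ioc (0:ℝ) 1 = Set.Ioo 0 x := by
        ext y
        simp only [Set.mem_inter_iff, Set.mem_Iio, Set.mem_Ioc, Set.mem_Ioo]
        constructor
        · rintro ⟨h, h', _⟩; exact ⟨h', h⟩
        · rintro ⟨h, h'⟩; exact ⟨h', h, le_trans h'.le hx1⟩
      rw [he2, Real.volume_Ioo, sub_zero]
    have h2 : μ {ω | X ω = x} = 0 := by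
      have he : {ω | X ω = x} = X ⁻¹' {x} := rfl
      rw [he, hmap (measurableSet_singleton x),
        Measure.restrict_apply (measurableSet_singleton x)]
      exact measure_mono_null Set.inter_subset_left Real.volume_singleton
    rw [mdf, h1, h2]
    simp [ENNReal.toReal_ofReal hx0.le]
  -- mdf of Yk at each value
  have hmdfY : ∀ i ∈ Finset.Icc 1 k, mdf μ (Yk X m k) (mc i) = c i := by
    intro i hik
    obtain ⟨hi1, hik2⟩ := Finset.mem_Icc.mp hik
    have hir : (1:ℝ) ≤ i := by exact_mod_cast hi1
    have hikr : (i:ℝ) ≤ k := by exact_mod_cast hik2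
    have hA : {x : ℝ | S k mc x < mc i} ∩ Set.Ioc 0 1 = Set.Ioc 0 (((i:ℝ)-1)/k) := by
      ext x
      simp only [Set.mem_inter_iff, Set.mem_setOf_eq, Set.mem_Ioc]
      constructor
      · rintro ⟨hlt, hx0, hx1⟩
        obtain ⟨j, hjk, hj⟩ := exists_piece hk0 ⟨hx0, hx1⟩
        rw [S_eval hk0 mc hjk hj] at hlt
        have hd : (j:ℝ)/k < (i:ℝ)/k := hm.lt_iff_lt.mp hlt
        have hji : (j:ℝ) < i := (div_lt_div_iff_of_pos_right hk').mp hd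
        have hjiN : j < i := by exact_mod_cast hji
        have hjle : (j:ℝ) ≤ (i:ℝ) - 1 := by
          have : (j:ℝ) + 1 ≤ i := by exact_mod_cast hjiN
          linarith
        exact ⟨hx0, le_trans hj.2 (by gcongr)⟩
      · rintro ⟨hx0, hxle⟩
        have hx1 : x ≤ 1 := le_trans hxle (by rw [div_le_one hk']; linarith)
        obtain ⟨j, hjk, hj⟩ := exists_piece hk0 ⟨hx0, hx1⟩
        refine ⟨?_, hx0, hx1⟩
        rw [S_eval hk0 mc hjk hj]
        apply hm
        have h3 : ((j:ℝ) - 1)/k < ((i:ℝ)-1)/k := lt_of_lt_of_le hj.1 hxle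
        have hji : (j:ℝ) - 1 < (i:ℝ) - 1 := (div_lt_div_iff_of_pos_right hk').mp h3
        exact (div_lt_div_iff_of_pos_right hk').mpr (by linarith)
    have hB : {x : ℝ | S k mc x = mc i} ∩ Set.Ioc 0 1 = Set.Ioc (((i:ℝ)-1)/k) ((i:ℝ)/k) := by
      ext x
      simp only [Set.mem_inter_iff, Set.mem_setOf_eq]
      constructor
      · rintro ⟨heq, hx⟩
        obtain ⟨j, hjk, hj⟩ := exists_piece hk0 hx
        rw [S_eval hk0 mc hjk hj] at heq
        have hd : (j:ℝ)/k = (i:ℝ)/k := hm.injective heq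
        have : (j:ℝ) = i := by
          field_simp at hd
          exact_mod_cast hd
        have hji : j = i := by exact_mod_cast this
        rwa [hji] at hj
      · intro hx
        exact ⟨S_eval hk0 mc hik hx, piece_subset hik hx⟩
    have hSbm : MeasurableSet {x : ℝ | S k mc x < mc i} :=
      measurableSet_lt (measurable_S k mc) measurable_const
    have hSem : MeasurableSet {x : ℝ | S k mc x = mc i} :=
      measurableSet_eq_fun (measurable_S k mc) measurable_const
    have h1 : μ {ω | Yk X m k ω < mc i} = ENNReal.ofReal (((i:ℝ)-1)/k) := by
      have he : {ω | Yk X m k ω < mc i} = X ⁻¹' {x | S k mc x < mc i} := by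
        ext ω; simp [hY]
      rw [he, hmap hSbm, Measure.restrict_apply hSbm, hA, Real.volume_Ioc, sub_zero]
    have h2 : μ {ω | Yk X m k ω = mc i} = ENNReal.ofReal (1/k) := by
      have he : {ω | Yk X m k ω = mc i} = X ⁻¹' {x | S k mc x = mc i} := by
        ext ω; simp [hY]
      rw [he, hmap hSem, Measure.restrict_apply hSem, hB, ← piece_len hk0 i]
    rw [mdf, h1, h2, ENNReal.toReal_ofReal (div_nonneg (by linarith) hk'.le),
      ENNReal.toReal_ofReal (by positivity), hc]
    field_simp
    ring
  -- a.e. equalities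
  have haeX : (fun ω => mdf μ X (X ω)) =ᵐ[μ] fun ω => X ω :=
    hae.mono fun ω h => hmdfX _ h
  have haeY : (fun ω => mdf μ (Yk X m k) (Yk X m k ω)) =ᵐ[μ] fun ω => S k c (X ω) := by
    filter_upwards [hae] with ω h
    obtain ⟨i, hik, hi⟩ := exists_piece hk0 h
    rw [hY, S_eval hk0 mc hik hi, S_eval hk0 c hik hi]
    exact hmdfY i hik
  -- transfer integrals
  have hint : ∀ (p : ℝ → ℝ), Measurable p → ∫ ω, p (X ω) ∂μ = ∫ x, p x ∂ν := by
    intro p hp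
    rw [← hunif]
    exact (integral_map hX.aemeasurable hp.aestronglyMeasurable).symm
  have hcovar : ∀ (f g : Ω → ℝ) (p q : ℝ → ℝ), Measurable p → Measurable q →
      f =ᵐ[μ] (fun ω => p (X ω)) → g =ᵐ[μ] (fun ω => q (X ω)) →
      covar μ f g = (∫ x, p x * q x ∂ν) - (∫ x, p x ∂ν) * (∫ x, q x ∂ν) := by
    intro f g p q hp hq hf hg
    rw [covar, integral_congr_ae (f := fun ω => f ω * g ω) (g := fun ω => p (X ω) * q (X ω)) (hf.mul hg), integral_congr_ae hf, integral_congr_ae hg,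
      hint _ hp, hint _ hq, ← hint (fun x => p x * q x) (hp.mul hq)]
  -- the four basic integrals
  have Ip : ∫ x, x ∂ν = 1/2 := by
    rw [show (∫ x, x ∂ν) = ∫ x in Set.Ioc (0:ℝ) 1, x from rfl, integral_Ioc_id zero_le_one]
    norm_num
  have Ipp : ∫ x, x * x ∂ν = 1/3 := by
    rw [show (∫ x, x * x ∂ν) = ∫ x in Set.Ioc (0:ℝ) 1, x * x from rfl,
      integral_Ioc_sq zero_le_one]
    norm_num
  have Iq : ∫ x, S k c x ∂ν = 1/2 := by
    rw [integral_S hk0 c]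
    have hterm : ∀ i ∈ Finset.Icc 1 k, c i / k = (2*(i:ℝ)-1) * (1/(2*(k:ℝ)^2)) := by
      intro i _; rw [hc]; ring
    rw [Finset.sum_congr rfl hterm, ← Finset.sum_mul, sum1]
    field_simp
  have Iqq : ∫ x, S k c x * S k c x ∂ν = (4*(k:ℝ)^2 - 1)/(12*(k:ℝ)^2) := by
    simp_rw [S_mul hk0 c c]
    rw [integral_S hk0]
    have hterm : ∀ i ∈ Finset.Icc 1 k, (c i * c i) / k = (2*(i:ℝ)-1)^2 * (1/(4*(k:ℝ)^3)) := by
      intro i _; rw [hc]; ring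
    rw [Finset.sum_congr rfl hterm, ← Finset.sum_mul, sum2]
    field_simp
    ring
  have Ipq : ∫ x, x * S k c x ∂ν = (4*(k:ℝ)^2 - 1)/(12*(k:ℝ)^2) := by
    rw [integral_xS hk0 c]
    have hterm : ∀ i ∈ Finset.Icc 1 k,
        c i * (2*(i:ℝ)-1) / (2*(k:ℝ)^2) = (2*(i:ℝ)-1)^2 * (1/(4*(k:ℝ)^3)) := by
      intro i _; rw [hc]; ring
    rw [Finset.sum_congr rfl hterm, ← Finset.sum_mul, sum2]
    field_simp
    ring
  -- covariances
  have hCxy : covar μ (fun ω => mdf μ X (X ω)) (fun ω => mdf μ (Yk X m k) (Yk X m k ω))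
      = ((k:ℝ)^2 - 1)/(12*(k:ℝ)^2) := by
    rw [hcovar _ _ (fun x => x) (S k c) measurable_id (measurable_S k c) haeX haeY,
      Ipq, Ip, Iq]
    field_simp
    ring
  have hCyx : covar μ (fun ω => mdf μ (Yk X m k) (Yk X m k ω)) (fun ω => mdf μ X (X ω))
      = ((k:ℝ)^2 - 1)/(12*(k:ℝ)^2) := by
    have hswap : ∀ x : ℝ, S k c x * x = x * S k c x := fun x => mul_comm _ _
    rw [hcovar _ _ (S k c) (fun x => x) (measurable_S k c) measurable_id haeY haeX]
    simp_rw [hswap]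
    rw [Ipq, Ip, Iq]
    field_simp
    ring
  have hCyy : covar μ (fun ω => mdf μ (Yk X m k) (Yk X m k ω))
      (fun ω => mdf μ (Yk X m k) (Yk X m k ω)) = ((k:ℝ)^2 - 1)/(12*(k:ℝ)^2) := by
    rw [hcovar _ _ (S k c) (S k c) (measurable_S k c) (measurable_S k c) haeY haeY,
      Iqq, Iq]
    field_simp
    ring
  have hCxx : covar μ (fun ω => mdf μ X (X ω)) (fun ω => mdf μ X (X ω)) = 1/12 := by
    rw [hcovar _ _ (fun x => x) (fun x => x) measurable_id measurable_id haeX haeX,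
      Ipp, Ip]
    norm_num
  have hVne : ((k:ℝ)^2 - 1)/(12*(k:ℝ)^2) ≠ 0 := by
    apply div_ne_zero
    · nlinarith
    · positivity
  constructor
  · rw [agc, hCxy, hCyy, div_self hVne]
  · rw [agc, hCyx, hCxx]
    field_simp


end
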